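/- Let s > 1/2 and T > 0. There exists a constant C > 0 such that for all u, v in Z_{s,T} = C([0,T]; H^s₀(𝕋)) ∩ L²(0,T; H^{s+1/2}₀(𝕋)): ‖(uv)_x‖_{L²(0,T; H^{s−1/2}(𝕋))} ≤ C‖u‖_{Z_{s,T}} ‖v‖_{Z_{s,T}}, where ‖w‖_{Z_{s,T}} = ‖w‖_{L^∞(0,T;H^s)} + ‖w‖_{L²(0,T;H^{s+1/2})}. -/

import Mathlib

noncomputable section
open MeasureTheory

/-- The squared `H^s(𝕋)` norm through Fourier coefficients. -/
def hNormSq (s : ℝ) (w : ℤ → ℂ) : ℝ :=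
  ∑' k : ℤ, (1 + (k : ℝ) ^ 2) ^ s * ‖w k‖ ^ 2

/-- The norm of `Z_{s,T} = C([0,T];H^s₀(𝕋)) ∩ L²(0,T;H^{s+1/2}₀(𝕋))`:
`‖w‖_{Z_{s,T}} = ‖w‖_{L^∞(0,T;H^s)} + ‖w‖_{L²(0,T;H^{s+1/2})}`, for a
time-dependent family of Fourier coefficients `w : ℝ → ℤ → ℂ`. -/
def Znorm (s T : ℝ) (w : ℝ → ℤ → ℂ) : ℝ :=
  (⨆ t : Set.Icc (0 : ℝ) T, Real.sqrt (hNormSq s (w t))) +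
    Real.sqrt (∫ t in Set.Ioo 0 T, hNormSq (s + 1 / 2) (w t))

open ENNReal

lemma tsum_CS (f g : ℤ → ℝ≥0∞) : (∑' k, f k * g k) ^ 2 ≤ (∑' k, f k ^ 2) * (∑' k, g k ^ 2) := by
  have hpq : (2:ℝ).HolderConjugate 2 := Real.HolderConjugate.two_two
  have h := ENNReal.lintegral_mul_le_Lp_mul_Lq (Measure.count : Measure ℤ) hpq
    (measurable_of_countable f).aemeasurable (measurable_of_countable g).aemeasurable
  simp only [lintegral_count] at h
  have e : ∀ h : ℤ → ℝ≥0∞, (∑' k, h k ^ (2:ℝ)) = ∑' k, h k ^ 2 := by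
    intro h; apply tsum_congr; intro k; rw [← ENNReal.rpow_natCast (h k) 2]; norm_num
  calc (∑' k, f k * g k) ^ 2
      ≤ ((∑' k, f k ^ (2:ℝ)) ^ (1/(2:ℝ)) * (∑' k, g k ^ (2:ℝ)) ^ (1/(2:ℝ))) ^ 2 :=
        pow_le_pow_left' h 2
    _ = (∑' k, f k ^ 2) * (∑' k, g k ^ 2) := by
        rw [mul_pow, ← ENNReal.rpow_natCast (_ ^ (1/(2:ℝ))) 2, ← ENNReal.rpow_natCast (_ ^ (1/(2:ℝ))) 2,
          ← ENNReal.rpow_mul, ← ENNReal.rpow_mul, e f, e g]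
        norm_num

lemma sqrt_mul_self (x : ℝ≥0∞) : x ^ (1/2:ℝ) * x ^ (1/2:ℝ) = x := by
  rw [← ENNReal.rpow_add_of_nonneg _ _ (by norm_num) (by norm_num)]
  norm_num

lemma sqrt_sq (x : ℝ≥0∞) : (x ^ (1/2:ℝ)) ^ 2 = x := by rw [sq, sqrt_mul_self]

lemma conv_l2_l1 (C D : ℤ → ℝ≥0∞) :
    ∑' k, (∑' m, C m * D (k - m)) ^ 2 ≤ (∑' m, C m ^ 2) * (∑' m, D m) ^ 2 := by
  have key : ∀ k : ℤ, (∑' m, C m * D (k - m)) ^ 2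
      ≤ (∑' m, C m ^ 2 * D (k - m)) * (∑' m, D m) := by
    intro k
    have h1 : ∀ m : ℤ, C m * D (k - m)
        = (C m * D (k - m) ^ (1/2:ℝ)) * (D (k - m) ^ (1/2:ℝ)) := by
      intro m; rw [mul_assoc, sqrt_mul_self]
    calc (∑' m, C m * D (k - m)) ^ 2
        = (∑' m, (C m * D (k - m) ^ (1/2:ℝ)) * (D (k - m) ^ (1/2:ℝ))) ^ 2 := by
          rw [tsum_congr h1]
      _ ≤ (∑' m, (C m * D (k - m) ^ (1/2:ℝ)) ^ 2) * (∑' m, (D (k - m) ^ (1/2:ℝ)) ^ 2) :=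
          tsum_CS _ _
      _ = (∑' m, C m ^ 2 * D (k - m)) * (∑' m, D (k - m)) := by
          congr 1 <;> apply tsum_congr <;> intro m
          · rw [mul_pow, sqrt_sq]
          · rw [sqrt_sq]
      _ = (∑' m, C m ^ 2 * D (k - m)) * (∑' m, D m) := by
          congr 1; exact (Equiv.subLeft k).tsum_eq D
  calc ∑' k, (∑' m, C m * D (k - m)) ^ 2
      ≤ ∑' k, (∑' m, C m ^ 2 * D (k - m)) * (∑' m, D m) := ENNReal.tsum_le_tsum key
    _ = (∑' k, ∑' m, C m ^ 2 * D (k - m)) * (∑' m, D m) := ENNReal.tsum_mul_right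
    _ = (∑' m, C m ^ 2 * ∑' k, D (k - m)) * (∑' m, D m) := by
        rw [ENNReal.tsum_comm]; congr 1; apply tsum_congr; intro m; rw [ENNReal.tsum_mul_left]
    _ = (∑' m, C m ^ 2) * (∑' m, D m) ^ 2 := by
        have : ∀ m : ℤ, (∑' k, D (k - m)) = ∑' n, D n := by
          intro m; exact (Equiv.subRight m).tsum_eq D
        simp_rw [this, ENNReal.tsum_mul_right]; ring

/-- ennreal weight `(1+k²)^r`. -/
def wt (r : ℝ) (k : ℤ) : ℝ≥0∞ := ENNReal.ofReal ((1 + (k:ℝ)^2) ^ r)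

lemma one_le_base (k : ℤ) : (1:ℝ) ≤ 1 + (k:ℝ)^2 := le_add_of_nonneg_right (sq_nonneg _)
lemma base_pos (k : ℤ) : (0:ℝ) < 1 + (k:ℝ)^2 := by positivity

lemma wt_mul (a b : ℝ) (k : ℤ) : wt a k * wt b k = wt (a+b) k := by
  rw [wt, wt, wt, ← ENNReal.ofReal_mul (by positivity), ← Real.rpow_add (base_pos k)]

lemma wt_tri {r : ℝ} (hr : 0 ≤ r) (k m : ℤ) :
    wt r k ≤ ENNReal.ofReal (4 ^ r) * (wt r m + wt r (k - m)) := by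
  rw [wt, wt, wt, ← ENNReal.ofReal_add (Real.rpow_nonneg (by positivity) r)
      (Real.rpow_nonneg (by positivity) r),
    ← ENNReal.ofReal_mul (Real.rpow_nonneg (by norm_num) r)]
  apply ENNReal.ofReal_le_ofReal
  set A := (1:ℝ) + (m:ℝ)^2 with hA
  set B := (1:ℝ) + ((k-m:ℤ):ℝ)^2 with hB
  have hA0 : (0:ℝ) < A := by positivity
  have hB0 : (0:ℝ) < B := by positivity
  have hbase : (1:ℝ) + (k:ℝ)^2 ≤ 4 * max A B := by
    have h2 : (1:ℝ) + (k:ℝ)^2 ≤ 2*A + 2*B := by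
      rw [hA, hB]; push_cast; nlinarith [sq_nonneg ((m:ℝ) - ((k:ℝ) - (m:ℝ)))]
    have := le_max_left A B; have := le_max_right A B
    linarith
  have hmax : max A B ^ r ≤ A ^ r + B ^ r := by
    rcases le_total A B with h | h
    · rw [max_eq_right h]; exact le_add_of_nonneg_left (Real.rpow_nonneg hA0.le r)
    · rw [max_eq_left h]; exact le_add_of_nonneg_right (Real.rpow_nonneg hB0.le r)
  calc (1 + (k:ℝ)^2) ^ r ≤ (4 * max A B) ^ r :=
        Real.rpow_le_rpow (by positivity) hbase hr
    _ = 4 ^ r * max A B ^ r := by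
        rw [Real.mul_rpow (by norm_num) (le_max_of_le_left hA0.le)]
    _ ≤ 4 ^ r * (A ^ r + B ^ r) := by
        have h4 : (0:ℝ) ≤ 4 ^ r := Real.rpow_nonneg (by norm_num) r
        nlinarith

/-- ℓ¹ bound by weighted ℓ²: `(∑ B)² ≤ (∑ (1+m²)^{-s}) * ∑ (1+m²)^s B²`, any `s`. -/
lemma l1_le (s : ℝ) (B : ℤ → ℝ≥0∞) :
    (∑' m, B m) ^ 2 ≤ (∑' m, wt (-s) m) * (∑' m, wt s m * B m ^ 2) := by
  have h1 : ∀ m : ℤ, B m = wt (-(s/2)) m * (wt (s/2) m * B m) := by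
    intro m
    rw [← mul_assoc, wt_mul]
    norm_num [wt, Real.rpow_zero]
  calc (∑' m, B m) ^ 2 = (∑' m, wt (-(s/2)) m * (wt (s/2) m * B m)) ^ 2 := by
        rw [tsum_congr h1]
    _ ≤ (∑' m, wt (-(s/2)) m ^ 2) * (∑' m, (wt (s/2) m * B m) ^ 2) := tsum_CS _ _
    _ = (∑' m, wt (-s) m) * (∑' m, wt s m * B m ^ 2) := by
        congr 1 <;> apply tsum_congr <;> intro m
        · rw [sq, wt_mul, show -(s/2) + -(s/2) = -s by ring]
        · rw [mul_pow, sq (wt _ m), wt_mul, show s/2 + s/2 = s by ring]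

lemma my_add_sq_le (x y : ℝ≥0∞) : (x + y) ^ 2 ≤ 4 * (x ^ 2 + y ^ 2) := by
  have h : x + y ≤ 2 * (x ⊔ y) := by
    rw [two_mul]; exact add_le_add (le_max_left x y) (le_max_right x y)
  calc (x + y) ^ 2 ≤ (2 * (x ⊔ y)) ^ 2 := pow_le_pow_left' h 2
    _ = 4 * (x ⊔ y) ^ 2 := by ring
    _ ≤ 4 * (x ^ 2 + y ^ 2) := by
        gcongr
        rcases max_cases x y with ⟨h1, _⟩ | ⟨h1, _⟩ <;> rw [h1]
        · exact le_add_of_nonneg_right zero_le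
        · exact le_add_of_nonneg_left zero_le

/-- Master bilinear convolution estimate in `ℝ≥0∞`. -/
lemma master {s σ : ℝ} (hσ : 0 ≤ σ) (A B : ℤ → ℝ≥0∞) :
    ∑' k, wt σ k * (∑' m, A m * B (k - m)) ^ 2
      ≤ ENNReal.ofReal (4 ^ σ) * 4 * ((∑' m, wt (-s) m) *
        ((∑' m, wt σ m * A m ^ 2) * (∑' m, wt s m * B m ^ 2)
          + (∑' m, wt s m * A m ^ 2) * (∑' m, wt σ m * B m ^ 2))) := by
  set c : ℝ≥0∞ := ENNReal.ofReal (4 ^ (σ/2)) with hc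
  set A' : ℤ → ℝ≥0∞ := fun m => wt (σ/2) m * A m with hA'
  set B' : ℤ → ℝ≥0∞ := fun m => wt (σ/2) m * B m with hB'
  have hwt : ∀ k : ℤ, wt σ k = wt (σ/2) k * wt (σ/2) k := by
    intro k; rw [wt_mul, show σ/2 + σ/2 = σ by ring]
  have perk : ∀ k : ℤ, wt σ k * (∑' m, A m * B (k - m)) ^ 2
      ≤ c ^ 2 * 4 * ((∑' m, A' m * B (k - m)) ^ 2 + (∑' m, A m * B' (k - m)) ^ 2) := by
    intro k
    have step1 : wt (σ/2) k * ∑' m, A m * B (k - m)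
        ≤ c * ((∑' m, A' m * B (k - m)) + (∑' m, A m * B' (k - m))) := by
      rw [← ENNReal.tsum_mul_left]
      calc ∑' m, wt (σ/2) k * (A m * B (k - m))
          ≤ ∑' m, (c * (wt (σ/2) m + wt (σ/2) (k - m))) * (A m * B (k - m)) := by
            apply ENNReal.tsum_le_tsum; intro m
            exact mul_le_mul_left (wt_tri (by linarith) k m) _
        _ = ∑' m, (c * (A' m * B (k - m)) + c * (A m * B' (k - m))) := by
            apply tsum_congr; intro m; rw [hA', hB']; ring
        _ = c * ((∑' m, A' m * B (k - m)) + (∑' m, A m * B' (k - m))) := by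
            rw [ENNReal.tsum_add, ENNReal.tsum_mul_left, ENNReal.tsum_mul_left, mul_add]
    calc wt σ k * (∑' m, A m * B (k - m)) ^ 2
        = (wt (σ/2) k * ∑' m, A m * B (k - m)) ^ 2 := by rw [hwt k]; ring
      _ ≤ (c * ((∑' m, A' m * B (k - m)) + (∑' m, A m * B' (k - m)))) ^ 2 :=
          pow_le_pow_left' step1 2
      _ = c ^ 2 * ((∑' m, A' m * B (k - m)) + (∑' m, A m * B' (k - m))) ^ 2 := by ring
      _ ≤ c ^ 2 * (4 * ((∑' m, A' m * B (k - m)) ^ 2 + (∑' m, A m * B' (k - m)) ^ 2)) :=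
          mul_le_mul_right (my_add_sq_le _ _) _
      _ = c ^ 2 * 4 * ((∑' m, A' m * B (k - m)) ^ 2 + (∑' m, A m * B' (k - m)) ^ 2) := by
          ring
  have swap : ∀ k : ℤ, (∑' m, A m * B' (k - m)) = ∑' m, B' m * A (k - m) := by
    intro k
    rw [← ((Equiv.subLeft k).tsum_eq (fun m => B' m * A (k - m)))]
    apply tsum_congr; intro m
    simp [mul_comm]
  have sum1 : ∑' k, (∑' m, A' m * B (k - m)) ^ 2
      ≤ (∑' m, wt σ m * A m ^ 2) * ((∑' m, wt (-s) m) * (∑' m, wt s m * B m ^ 2)) := by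
    calc ∑' k, (∑' m, A' m * B (k - m)) ^ 2
        ≤ (∑' m, A' m ^ 2) * (∑' m, B m) ^ 2 := conv_l2_l1 _ _
      _ ≤ (∑' m, wt σ m * A m ^ 2) * ((∑' m, wt (-s) m) * (∑' m, wt s m * B m ^ 2)) := by
          apply mul_le_mul'
          · apply le_of_eq; apply tsum_congr; intro m
            rw [hA', mul_pow, sq (wt _ m), wt_mul, show σ/2 + σ/2 = σ by ring]
          · exact l1_le s B
  have sum2 : ∑' k, (∑' m, A m * B' (k - m)) ^ 2
      ≤ (∑' m, wt σ m * B m ^ 2) * ((∑' m, wt (-s) m) * (∑' m, wt s m * A m ^ 2)) := by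
    calc ∑' k, (∑' m, A m * B' (k - m)) ^ 2
        = ∑' k, (∑' m, B' m * A (k - m)) ^ 2 := by
          apply tsum_congr; intro k; rw [swap k]
      _ ≤ (∑' m, B' m ^ 2) * (∑' m, A m) ^ 2 := conv_l2_l1 _ _
      _ ≤ (∑' m, wt σ m * B m ^ 2) * ((∑' m, wt (-s) m) * (∑' m, wt s m * A m ^ 2)) := by
          apply mul_le_mul'
          · apply le_of_eq; apply tsum_congr; intro m
            rw [hB', mul_pow, sq (wt _ m), wt_mul, show σ/2 + σ/2 = σ by ring]
          · exact l1_le s A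
  have hc2 : c ^ 2 = ENNReal.ofReal (4 ^ σ) := by
    rw [hc, sq, ← ENNReal.ofReal_mul (Real.rpow_nonneg (by norm_num) _),
      ← Real.rpow_add (by norm_num : (0:ℝ) < 4), show σ/2 + σ/2 = σ by ring]
  calc ∑' k, wt σ k * (∑' m, A m * B (k - m)) ^ 2
      ≤ ∑' k, c ^ 2 * 4 * ((∑' m, A' m * B (k - m)) ^ 2 + (∑' m, A m * B' (k - m)) ^ 2) :=
        ENNReal.tsum_le_tsum perk
    _ = c ^ 2 * 4 * ((∑' k, (∑' m, A' m * B (k - m)) ^ 2)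
          + ∑' k, (∑' m, A m * B' (k - m)) ^ 2) := by
        rw [ENNReal.tsum_mul_left, ENNReal.tsum_add]
    _ ≤ c ^ 2 * 4 * ((∑' m, wt σ m * A m ^ 2) * ((∑' m, wt (-s) m) * (∑' m, wt s m * B m ^ 2))
          + (∑' m, wt σ m * B m ^ 2) * ((∑' m, wt (-s) m) * (∑' m, wt s m * A m ^ 2))) :=
        mul_le_mul_right (add_le_add sum1 sum2) _
    _ = ENNReal.ofReal (4 ^ σ) * 4 * ((∑' m, wt (-s) m) *
        ((∑' m, wt σ m * A m ^ 2) * (∑' m, wt s m * B m ^ 2)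
          + (∑' m, wt s m * A m ^ 2) * (∑' m, wt σ m * B m ^ 2))) := by
        rw [hc2]; ring

lemma summable_wt {s : ℝ} (hs : 1/2 < s) :
    Summable (fun m : ℤ => (1 + (m:ℝ)^2) ^ (-s)) := by
  have h2s : (1:ℝ) < 2 * s := by linarith
  have hsum : Summable (fun m : ℤ => |(m:ℝ)| ^ (-(2*s)) + if m = 0 then (1:ℝ) else 0) := by
    apply (Real.summable_abs_int_rpow h2s).add
    apply summable_of_ne_finset_zero (s := {(0:ℤ)})
    intro m hm
    simp at hm
    simp [hm]
  apply Summable.of_nonneg_of_le (fun m => Real.rpow_nonneg (base_pos m).le _) _ hsum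
  intro m
  by_cases hm : m = 0
  · subst hm
    rw [if_pos rfl]
    have h1 : (1 + ((0:ℤ):ℝ)^2) ^ (-s) = 1 := by norm_num
    rw [h1]
    exact le_add_of_nonneg_left (Real.rpow_nonneg (abs_nonneg _) _)
  · have hm' : (0:ℝ) < |(m:ℝ)| := by
      simp only [abs_pos]
      exact_mod_cast hm
    have key : (1 + (m:ℝ)^2) ^ (-s) ≤ |(m:ℝ)| ^ (-(2*s)) := by
      have h1 : |(m:ℝ)| ^ (-(2*s)) = ((m:ℝ)^2) ^ (-s) := by
        rw [← sq_abs, ← Real.rpow_natCast |(m:ℝ)| 2, ← Real.rpow_mul (abs_nonneg _)]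
        ring_nf
      rw [h1]
      apply Real.rpow_le_rpow_of_nonpos (by positivity) (by linarith [sq_nonneg ((m:ℝ))])
        (by linarith)
    rw [if_neg hm, add_zero]
    exact key

lemma ofReal_tsum_le {f : ℤ → ℝ} (hf : ∀ k, 0 ≤ f k) :
    ENNReal.ofReal (∑' k, f k) ≤ ∑' k, ENNReal.ofReal (f k) := by
  by_cases h : Summable f
  · rw [ENNReal.ofReal_tsum_of_nonneg hf h]
  · rw [tsum_eq_zero_of_not_summable h]
    simp

lemma hNormSq_nonneg (r : ℝ) (w : ℤ → ℂ) : 0 ≤ hNormSq r w :=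
  tsum_nonneg fun k => by positivity

/-- ennreal weighted sum equals `ofReal` of `hNormSq` under summability. -/
lemma wt_tsum_eq (r : ℝ) (a : ℤ → ℂ)
    (ha : Summable fun k : ℤ => (1 + (k:ℝ)^2) ^ r * ‖a k‖ ^ 2) :
    (∑' k, wt r k * (ENNReal.ofReal (‖a k‖)) ^ 2)
      = ENNReal.ofReal (hNormSq r a) := by
  rw [hNormSq, ENNReal.ofReal_tsum_of_nonneg (fun k => by positivity) ha]
  apply tsum_congr; intro k
  rw [ENNReal.ofReal_mul (Real.rpow_nonneg (base_pos k).le _), wt,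
    ← ENNReal.ofReal_pow (norm_nonneg _)]

def Kconst (s : ℝ) : ℝ := 4 ^ (s + 1/2) * 4 * (∑' m : ℤ, wt (-s) m).toReal

lemma Kconst_nonneg (s : ℝ) : 0 ≤ Kconst s := by
  apply mul_nonneg (mul_nonneg (Real.rpow_nonneg (by norm_num) _) (by norm_num))
    ENNReal.toReal_nonneg

lemma G_eq {s : ℝ} (hs : 1/2 < s) :
    (∑' m : ℤ, wt (-s) m) = ENNReal.ofReal (∑' m : ℤ, (1 + (m:ℝ)^2) ^ (-s)) := by
  rw [ENNReal.ofReal_tsum_of_nonneg (fun m => Real.rpow_nonneg (base_pos m).le _)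
    (summable_wt hs)]
  rfl

lemma G_ne_top {s : ℝ} (hs : 1/2 < s) : (∑' m : ℤ, wt (-s) m) ≠ ⊤ := by
  rw [G_eq hs]; exact ENNReal.ofReal_ne_top

lemma ofReal_combo {c g x y z w : ℝ} (hc : 0 ≤ c) (hg : 0 ≤ g) (hx : 0 ≤ x) (hy : 0 ≤ y)
    (hz : 0 ≤ z) (hw : 0 ≤ w) :
    ENNReal.ofReal c * 4 * (ENNReal.ofReal g *
        (ENNReal.ofReal x * ENNReal.ofReal y + ENNReal.ofReal z * ENNReal.ofReal w))
      = ENNReal.ofReal (c * 4 * (g * (x * y + z * w))) := by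
  rw [ENNReal.ofReal_mul (by positivity), ENNReal.ofReal_mul hc,
    ENNReal.ofReal_mul hg, ENNReal.ofReal_add (by positivity) (by positivity),
    ENNReal.ofReal_mul hx, ENNReal.ofReal_mul hz]
  norm_num

set_option maxHeartbeats 1000000 in
lemma pointwise {s : ℝ} (hs : 1/2 < s) (a b : ℤ → ℂ)
    (ha : Summable fun k : ℤ => (1 + (k:ℝ)^2) ^ (s + 1/2) * ‖a k‖ ^ 2)
    (hb : Summable fun k : ℤ => (1 + (k:ℝ)^2) ^ (s + 1/2) * ‖b k‖ ^ 2) :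
    hNormSq (s - 1/2) (fun k => Complex.I * (k:ℂ) * ∑' m : ℤ, a m * b (k - m))
      ≤ Kconst s * (hNormSq (s + 1/2) a * hNormSq s b
          + hNormSq s a * hNormSq (s + 1/2) b) := by
  have hσ : 0 ≤ s + 1/2 := by linarith
  have hlev : ∀ (c : ℤ → ℂ),
      (Summable fun k : ℤ => (1 + (k:ℝ)^2) ^ (s + 1/2) * ‖c k‖ ^ 2) →
      Summable fun k : ℤ => (1 + (k:ℝ)^2) ^ s * ‖c k‖ ^ 2 := by
    intro c hc
    apply Summable.of_nonneg_of_le (fun k => by positivity) _ hc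
    intro k
    apply mul_le_mul_of_nonneg_right _ (by positivity)
    exact Real.rpow_le_rpow_of_exponent_le (one_le_base k) (by linarith)
  have has := hlev a ha
  have hbs := hlev b hb
  set A : ℤ → ℝ≥0∞ := fun m => ENNReal.ofReal (‖a m‖) with hA
  set B : ℤ → ℝ≥0∞ := fun m => ENNReal.ofReal (‖b m‖) with hB
  have term : ∀ k : ℤ,
      ENNReal.ofReal ((1 + (k:ℝ)^2) ^ (s - 1/2)
          * ‖Complex.I * (k:ℂ) * ∑' m : ℤ, a m * b (k - m)‖ ^ 2)
        ≤ wt (s + 1/2) k * (∑' m, A m * B (k - m)) ^ 2 := by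
    intro k
    set z : ℂ := ∑' m : ℤ, a m * b (k - m) with hz
    have habs : ‖Complex.I * (k:ℂ) * z‖ = |(k:ℝ)| * ‖z‖ := by
      rw [norm_mul, norm_mul, Complex.norm_I, one_mul, Complex.norm_intCast]
    have hzle : ENNReal.ofReal (‖z‖) ≤ ∑' m, A m * B (k - m) := by
      by_cases hsum : Summable (fun m : ℤ => a m * b (k - m))
      · have hn : Summable (fun m : ℤ => ‖a m * b (k - m)‖) := by
          simpa using summable_norm_iff.mpr hsum
        calc ENNReal.ofReal (‖z‖)
            ≤ ENNReal.ofReal (∑' m : ℤ, ‖a m * b (k - m)‖) := by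
              apply ENNReal.ofReal_le_ofReal
              simpa using norm_tsum_le_tsum_norm
                ((summable_norm_iff (f := fun m : ℤ => a m * b (k - m))).mpr hsum)
          _ = ∑' m : ℤ, ENNReal.ofReal (‖a m * b (k - m)‖) :=
              ENNReal.ofReal_tsum_of_nonneg (fun m => norm_nonneg _) hn
          _ = ∑' m, A m * B (k - m) := by
              apply tsum_congr; intro m
              rw [norm_mul, ENNReal.ofReal_mul (norm_nonneg _)]
      · rw [hz, tsum_eq_zero_of_not_summable hsum]
        simp
    have hreal : (1 + (k:ℝ)^2) ^ (s - 1/2) * ‖Complex.I * (k:ℂ) * z‖ ^ 2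
        ≤ (1 + (k:ℝ)^2) ^ (s + 1/2) * ‖z‖ ^ 2 := by
      rw [habs, mul_pow, sq_abs]
      have h1 : (1 + (k:ℝ)^2) ^ (s - 1/2) * (k:ℝ)^2 ≤ (1 + (k:ℝ)^2) ^ (s + 1/2) := by
        calc (1 + (k:ℝ)^2) ^ (s - 1/2) * (k:ℝ)^2
            ≤ (1 + (k:ℝ)^2) ^ (s - 1/2) * ((1:ℝ) + (k:ℝ)^2) ^ (1:ℝ) := by
              rw [Real.rpow_one]
              apply mul_le_mul_of_nonneg_left _ (Real.rpow_nonneg (base_pos k).le _)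
              linarith
          _ = (1 + (k:ℝ)^2) ^ (s + 1/2) := by
              rw [← Real.rpow_add (base_pos k), show s - 1/2 + 1 = s + 1/2 by ring]
      calc (1 + (k:ℝ)^2) ^ (s - 1/2) * ((k:ℝ)^2 * ‖z‖ ^ 2)
          = ((1 + (k:ℝ)^2) ^ (s - 1/2) * (k:ℝ)^2) * ‖z‖ ^ 2 := by ring
        _ ≤ (1 + (k:ℝ)^2) ^ (s + 1/2) * ‖z‖ ^ 2 :=
            mul_le_mul_of_nonneg_right h1 (by positivity)
    calc ENNReal.ofReal ((1 + (k:ℝ)^2) ^ (s - 1/2) * ‖Complex.I * (k:ℂ) * z‖ ^ 2)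
        ≤ ENNReal.ofReal ((1 + (k:ℝ)^2) ^ (s + 1/2) * ‖z‖ ^ 2) :=
          ENNReal.ofReal_le_ofReal hreal
      _ = wt (s + 1/2) k * (ENNReal.ofReal (‖z‖)) ^ 2 := by
          rw [ENNReal.ofReal_mul (Real.rpow_nonneg (base_pos k).le _), wt,
            ← ENNReal.ofReal_pow (norm_nonneg _)]
      _ ≤ wt (s + 1/2) k * (∑' m, A m * B (k - m)) ^ 2 :=
          mul_le_mul_right (pow_le_pow_left' hzle 2) _
  have hmaster := master (s := s) hσ A B
  rw [wt_tsum_eq (s + 1/2) a ha, wt_tsum_eq s a has, wt_tsum_eq (s + 1/2) b hb,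
    wt_tsum_eq s b hbs] at hmaster
  have hRHSnn : 0 ≤ Kconst s * (hNormSq (s + 1/2) a * hNormSq s b
      + hNormSq s a * hNormSq (s + 1/2) b) := by
    have h1 := hNormSq_nonneg (s + 1/2) a
    have h2 := hNormSq_nonneg s b
    have h3 := hNormSq_nonneg s a
    have h4 := hNormSq_nonneg (s + 1/2) b
    have := Kconst_nonneg s
    positivity
  rw [← ENNReal.ofReal_le_ofReal_iff hRHSnn]
  calc ENNReal.ofReal (hNormSq (s - 1/2) (fun k => Complex.I * (k:ℂ) * ∑' m : ℤ, a m * b (k - m)))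
      ≤ ∑' k : ℤ, ENNReal.ofReal ((1 + (k:ℝ)^2) ^ (s - 1/2)
          * ‖Complex.I * (k:ℂ) * ∑' m : ℤ, a m * b (k - m)‖ ^ 2) :=
        ofReal_tsum_le (fun k => by positivity)
    _ ≤ ∑' k, wt (s + 1/2) k * (∑' m, A m * B (k - m)) ^ 2 := ENNReal.tsum_le_tsum term
    _ ≤ ENNReal.ofReal (4 ^ (s + 1/2)) * 4 * ((∑' m : ℤ, wt (-s) m) *
          (ENNReal.ofReal (hNormSq (s + 1/2) a) * ENNReal.ofReal (hNormSq s b)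
            + ENNReal.ofReal (hNormSq s a) * ENNReal.ofReal (hNormSq (s + 1/2) b))) := hmaster
    _ = ENNReal.ofReal (Kconst s * (hNormSq (s + 1/2) a * hNormSq s b
          + hNormSq s a * hNormSq (s + 1/2) b)) := by
        rw [← ENNReal.ofReal_toReal (G_ne_top hs),
          ofReal_combo (Real.rpow_nonneg (by norm_num) _) ENNReal.toReal_nonneg
            (hNormSq_nonneg _ _) (hNormSq_nonneg _ _) (hNormSq_nonneg _ _) (hNormSq_nonneg _ _),
          Kconst]
        ring_nf

set_option maxHeartbeats 1000000 in
/-- **Bilinear estimate in `Z_{s,T}`.**  For `s > 1/2` and `T > 0` there is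
`C > 0` such that for all `u, v ∈ Z_{s,T}` (mean-zero, with the natural
membership hypotheses expressed through Fourier coefficients),
`‖(uv)_x‖_{L²(0,T;H^{s-1/2})} ≤ C ‖u‖_{Z_{s,T}} ‖v‖_{Z_{s,T}}`, where
`((uv)_x)^(k) = ik Σ_m û_m v̂_{k-m}`. -/
theorem bilinear_estimate_Z (s T : ℝ) (hs : 1 / 2 < s) (hT : 0 < T) :
    ∃ C : ℝ, 0 < C ∧ ∀ u v : ℝ → ℤ → ℂ,
      (∀ t ∈ Set.Icc (0 : ℝ) T, u t 0 = 0) →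
      (∀ t ∈ Set.Icc (0 : ℝ) T, v t 0 = 0) →
      (∀ t ∈ Set.Icc (0 : ℝ) T,
        Summable fun k : ℤ => (1 + (k : ℝ) ^ 2) ^ (s + 1 / 2) * ‖u t k‖ ^ 2) →
      (∀ t ∈ Set.Icc (0 : ℝ) T,
        Summable fun k : ℤ => (1 + (k : ℝ) ^ 2) ^ (s + 1 / 2) * ‖v t k‖ ^ 2) →
      BddAbove (Set.range fun t : Set.Icc (0 : ℝ) T => Real.sqrt (hNormSq s (u t))) →
      BddAbove (Set.range fun t : Set.Icc (0 : ℝ) T => Real.sqrt (hNormSq s (v t))) →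
      IntegrableOn (fun t => hNormSq (s + 1 / 2) (u t)) (Set.Ioo 0 T) →
      IntegrableOn (fun t => hNormSq (s + 1 / 2) (v t)) (Set.Ioo 0 T) →
      (∫ t in Set.Ioo 0 T,
          hNormSq (s - 1 / 2)
            (fun k => Complex.I * (k : ℂ) * ∑' m : ℤ, u t m * v t (k - m)))
        ≤ C ^ 2 * Znorm s T u ^ 2 * Znorm s T v ^ 2 := by
  refine ⟨max 1 (Real.sqrt (2 * Kconst s)), lt_of_lt_of_le one_pos (le_max_left _ _), ?_⟩
  intro u v _ _ hu hv hBu hBv hIu hIv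
  set C : ℝ := max 1 (Real.sqrt (2 * Kconst s)) with hC
  set Su : ℝ := ⨆ t : Set.Icc (0:ℝ) T, Real.sqrt (hNormSq s (u t)) with hSu
  set Sv : ℝ := ⨆ t : Set.Icc (0:ℝ) T, Real.sqrt (hNormSq s (v t)) with hSv
  set Ru : ℝ := Real.sqrt (∫ t in Set.Ioo 0 T, hNormSq (s + 1/2) (u t)) with hRu
  set Rv : ℝ := Real.sqrt (∫ t in Set.Ioo 0 T, hNormSq (s + 1/2) (v t)) with hRv
  have h0T : (0:ℝ) ∈ Set.Icc (0:ℝ) T := ⟨le_refl 0, hT.le⟩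
  have hSu0 : 0 ≤ Su := le_trans (Real.sqrt_nonneg _) (le_ciSup hBu ⟨0, h0T⟩)
  have hSv0 : 0 ≤ Sv := le_trans (Real.sqrt_nonneg _) (le_ciSup hBv ⟨0, h0T⟩)
  have hRu0 : 0 ≤ Ru := Real.sqrt_nonneg _
  have hRv0 : 0 ≤ Rv := Real.sqrt_nonneg _
  have hK := Kconst_nonneg s
  have hsupu : ∀ t ∈ Set.Icc (0:ℝ) T, hNormSq s (u t) ≤ Su ^ 2 := by
    intro t ht
    have h1 : Real.sqrt (hNormSq s (u t)) ≤ Su := le_ciSup hBu ⟨t, ht⟩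
    nlinarith [Real.sq_sqrt (hNormSq_nonneg s (u t)), Real.sqrt_nonneg (hNormSq s (u t))]
  have hsupv : ∀ t ∈ Set.Icc (0:ℝ) T, hNormSq s (v t) ≤ Sv ^ 2 := by
    intro t ht
    have h1 : Real.sqrt (hNormSq s (v t)) ≤ Sv := le_ciSup hBv ⟨t, ht⟩
    nlinarith [Real.sq_sqrt (hNormSq_nonneg s (v t)), Real.sqrt_nonneg (hNormSq s (v t))]
  set g : ℝ → ℝ := fun t =>
    Kconst s * (hNormSq (s + 1/2) (u t) * Sv ^ 2 + Su ^ 2 * hNormSq (s + 1/2) (v t)) with hg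
  have hgint : IntegrableOn g (Set.Ioo 0 T) :=
    ((hIu.mul_const _).add (hIv.const_mul _)).const_mul _
  have hmono : ∀ t ∈ Set.Ioo (0:ℝ) T,
      hNormSq (s - 1/2) (fun k => Complex.I * (k:ℂ) * ∑' m : ℤ, u t m * v t (k - m)) ≤ g t := by
    intro t ht
    have htI : t ∈ Set.Icc (0:ℝ) T := Set.Ioo_subset_Icc_self ht
    have hp := pointwise hs (u t) (v t) (hu t htI) (hv t htI)
    have h1 := hsupv t htI
    have h2 := hsupu t htI
    have n1 := hNormSq_nonneg (s + 1/2) (u t)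
    have n2 := hNormSq_nonneg (s + 1/2) (v t)
    have n3 := hNormSq_nonneg s (u t)
    have n4 := hNormSq_nonneg s (v t)
    calc hNormSq (s - 1/2) (fun k => Complex.I * (k:ℂ) * ∑' m : ℤ, u t m * v t (k - m))
        ≤ Kconst s * (hNormSq (s + 1/2) (u t) * hNormSq s (v t)
            + hNormSq s (u t) * hNormSq (s + 1/2) (v t)) := hp
      _ ≤ g t := by
          rw [hg]
          apply mul_le_mul_of_nonneg_left _ hK
          apply add_le_add
          · exact mul_le_mul_of_nonneg_left h1 n1
          · exact mul_le_mul_of_nonneg_right h2 n2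
  have hint : (∫ t in Set.Ioo 0 T,
      hNormSq (s - 1/2) (fun k => Complex.I * (k:ℂ) * ∑' m : ℤ, u t m * v t (k - m)))
        ≤ ∫ t in Set.Ioo 0 T, g t := by
    apply integral_mono_of_nonneg
    · exact Filter.Eventually.of_forall (fun t => hNormSq_nonneg _ _)
    · exact hgint
    · exact (ae_restrict_iff' measurableSet_Ioo).mpr (Filter.Eventually.of_forall hmono)
  have hIu0 : 0 ≤ ∫ t in Set.Ioo 0 T, hNormSq (s + 1/2) (u t) :=
    integral_nonneg (fun t => hNormSq_nonneg _ _)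
  have hIv0 : 0 ≤ ∫ t in Set.Ioo 0 T, hNormSq (s + 1/2) (v t) :=
    integral_nonneg (fun t => hNormSq_nonneg _ _)
  have hRuSq : Ru ^ 2 = ∫ t in Set.Ioo 0 T, hNormSq (s + 1/2) (u t) := Real.sq_sqrt hIu0
  have hRvSq : Rv ^ 2 = ∫ t in Set.Ioo 0 T, hNormSq (s + 1/2) (v t) := Real.sq_sqrt hIv0
  have hgeq : (∫ t in Set.Ioo 0 T, g t)
      = Kconst s * (Ru ^ 2 * Sv ^ 2 + Su ^ 2 * Rv ^ 2) := by
    rw [hg]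
    rw [integral_const_mul, integral_add (hIu.mul_const _) (hIv.const_mul _),
      integral_mul_const, integral_const_mul, hRuSq, hRvSq]
  have hZu : Znorm s T u = Su + Ru := rfl
  have hZv : Znorm s T v = Sv + Rv := rfl
  have hC1 : (1:ℝ) ≤ C := le_max_left _ _
  have hC2 : 2 * Kconst s ≤ C ^ 2 := by
    have h := le_max_right 1 (Real.sqrt (2 * Kconst s))
    have h2 : Real.sqrt (2 * Kconst s) ^ 2 = 2 * Kconst s := Real.sq_sqrt (by linarith)
    nlinarith [Real.sqrt_nonneg (2 * Kconst s)]
  have e1 : Ru ^ 2 * Sv ^ 2 ≤ (Su + Ru) ^ 2 * (Sv + Rv) ^ 2 :=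
    mul_le_mul (by nlinarith) (by nlinarith) (by positivity) (by positivity)
  have e2 : Su ^ 2 * Rv ^ 2 ≤ (Su + Ru) ^ 2 * (Sv + Rv) ^ 2 :=
    mul_le_mul (by nlinarith) (by nlinarith) (by positivity) (by positivity)
  have e3 : (0:ℝ) ≤ (Su + Ru) ^ 2 * (Sv + Rv) ^ 2 := by positivity
  calc (∫ t in Set.Ioo 0 T,
      hNormSq (s - 1/2) (fun k => Complex.I * (k:ℂ) * ∑' m : ℤ, u t m * v t (k - m)))
      ≤ ∫ t in Set.Ioo 0 T, g t := hint
    _ = Kconst s * (Ru ^ 2 * Sv ^ 2 + Su ^ 2 * Rv ^ 2) := hgeq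
    _ ≤ C ^ 2 * Znorm s T u ^ 2 * Znorm s T v ^ 2 := by
        rw [hZu, hZv]
        nlinarith [mul_le_mul_of_nonneg_left (add_le_add e1 e2) hK,
          mul_le_mul_of_nonneg_right hC2 e3]
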